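/- Let μ be the hardcore Gibbs distribution with fugacity λ ≥ 4^{1/ε + (log₂ n)/(εn)} on the independent sets of an n-vertex graph whose maximum independent set has size N ≥ n/2. Then the μ-probability that a sample has size less than (1−ε)N is at most 1/n. -/

import Mathlib

/-!
The partition function is at least `λ^N`, the weight of a maximum independent set, while the
at most `2^n` independent sets of size below `(1-ε)N` carry weight at most `λ^{(1-ε)N}` each.
So the tail probability is at most `2^n λ^{-εN}`, and the lower bound on `λ` together with
`N ≥ n/2` gives `λ^{εN} ≥ 4^{N + N log₂ n / n} ≥ 4^{(n + log₂ n)/2} = n 2^n`.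
-/

open Finset Real

lemma sum_pow_card_le_two_pow_mul_rpow {V : Type*} [Fintype V] (s : Finset (Finset V))
    {lam t : ℝ} (hlam : 1 ≤ lam) (hs : ∀ I ∈ s, (I.card : ℝ) ≤ t) :
    ∑ I ∈ s, lam ^ I.card ≤ 2 ^ Fintype.card V * lam ^ t := by
  calc ∑ I ∈ s, lam ^ I.card ≤ s.card • lam ^ t := by
        refine sum_le_card_nsmul _ _ _ fun I hI => ?_
        rw [← rpow_natCast]
        exact rpow_le_rpow_of_exponent_le hlam (hs I hI)
    _ ≤ 2 ^ Fintype.card V * lam ^ t := by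
        rw [nsmul_eq_mul]
        gcongr
        exact_mod_cast (card_le_univ s).trans_eq Fintype.card_finset

lemma natCast_mul_two_pow_eq_four_rpow {n : ℕ} (hn : 0 < n) :
    (n : ℝ) * 2 ^ n = (4 : ℝ) ^ ((n + logb 2 n) / 2) := by
  rw [show (4 : ℝ) = 2 ^ (2 : ℝ) by norm_num, ← rpow_mul zero_le_two,
    mul_div_cancel₀ _ two_ne_zero, rpow_add two_pos, rpow_natCast,
    rpow_logb two_pos one_lt_two.ne' (by positivity), mul_comm]

lemma natCast_mul_two_pow_le_rpow {n N : ℕ} (hn : 0 < n) (hN : (n : ℝ) / 2 ≤ N)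
    {ε lam : ℝ} (hε : 0 < ε) (hlam : (4 : ℝ) ^ (1 / ε + logb 2 n / (ε * n)) ≤ lam) :
    (n : ℝ) * 2 ^ n ≤ lam ^ (ε * N) := by
  have hn' : (0 : ℝ) < n := by exact_mod_cast hn
  have hlogb : 0 ≤ logb 2 n := logb_nonneg one_lt_two (by exact_mod_cast hn)
  have hexp : (n + logb 2 n) / 2 ≤ (1 / ε + logb 2 n / (ε * n)) * (ε * N) := by
    have hsplit : (1 / ε + logb 2 n / (ε * n)) * (ε * N) = N + logb 2 n * (N / n) := by
      field_simp
    have hhalf : 1 / 2 ≤ (N : ℝ) / n := by rw [le_div_iff₀ hn']; linarith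
    rw [hsplit]
    nlinarith
  calc (n : ℝ) * 2 ^ n = (4 : ℝ) ^ ((n + logb 2 n) / 2) := natCast_mul_two_pow_eq_four_rpow hn
    _ ≤ (4 : ℝ) ^ ((1 / ε + logb 2 n / (ε * n)) * (ε * N)) :=
        rpow_le_rpow_of_exponent_le (by norm_num) hexp
    _ = ((4 : ℝ) ^ (1 / ε + logb 2 n / (ε * n))) ^ (ε * N) := rpow_mul (by norm_num) _ _
    _ ≤ lam ^ (ε * N) := rpow_le_rpow (by positivity) hlam (by positivity)

theorem stmt_16_general {V : Type*} [Fintype V] [DecidableEq V]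
    (G : SimpleGraph V) [DecidableRel G.Adj]
    (n N : ℕ) (hcard : Fintype.card V = n) (hn : 0 < n)
    (hN : IsGreatest {m : ℕ | ∃ I : Finset V,
      (∀ a ∈ I, ∀ b ∈ I, a ≠ b → ¬ G.Adj a b) ∧ I.card = m} N)
    (hNhalf : (n : ℝ) / 2 ≤ (N : ℝ))
    (ε : ℝ) (hε0 : 0 < ε)
    (lam : ℝ) (hlam : (4 : ℝ) ^ (1 / ε + Real.logb 2 n / (ε * n)) ≤ lam) :
    (∑ I ∈ Finset.univ.filter (fun I : Finset V =>
        (∀ a ∈ I, ∀ b ∈ I, a ≠ b → ¬ G.Adj a b) ∧ (I.card : ℝ) < (1 - ε) * N),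
        lam ^ I.card) /
      (∑ I ∈ Finset.univ.filter (fun I : Finset V =>
        ∀ a ∈ I, ∀ b ∈ I, a ≠ b → ¬ G.Adj a b), lam ^ I.card) ≤ 1 / n := by
  have hkey := natCast_mul_two_pow_le_rpow hn hNhalf hε0 hlam
  have hlam1 : 1 ≤ lam := by
    have hlogb := logb_nonneg one_lt_two (Nat.one_le_cast.2 hn)
    exact (one_le_rpow (by norm_num) (by positivity)).trans hlam
  obtain ⟨⟨Imax, hImax, hImaxCard⟩, -⟩ := hN
  have hZ : lam ^ (N : ℝ) ≤ ∑ I ∈ Finset.univ.filter (fun I : Finset V =>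
      ∀ a ∈ I, ∀ b ∈ I, a ≠ b → ¬ G.Adj a b), lam ^ I.card := by
    rw [rpow_natCast, ← hImaxCard]
    exact single_le_sum (f := fun I : Finset V => lam ^ I.card)
      (fun I _ => pow_nonneg (by positivity) _) (mem_filter.2 ⟨mem_univ Imax, hImax⟩)
  rw [div_le_div_iff₀ ((rpow_pos_of_pos (by positivity) _).trans_le hZ) (by positivity)]
  calc _ ≤ 2 ^ n * lam ^ ((1 - ε) * N) * n := by
        gcongr
        exact hcard ▸ sum_pow_card_le_two_pow_mul_rpow _ hlam1
          fun I hI => (mem_filter.1 hI).2.2.le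
    _ = lam ^ ((1 - ε) * N) * (n * 2 ^ n) := by ring
    _ ≤ lam ^ ((1 - ε) * N) * lam ^ (ε * N) := by gcongr
    _ = lam ^ (N : ℝ) := by rw [← rpow_add (by positivity)]; ring_nf
    _ ≤ _ := by rw [one_mul]; exact hZ

/-- **The hardcore measure concentrates on large independent sets.**
Let `G` be a graph on `n` vertices with independence number `N ≥ n/2`, let
`ε ∈ (0,1)` and `λ ≥ 4^{1/ε + (log₂ n)/(εn)}`. Then the probability, under the hardcore
Gibbs measure `μ(I) ∝ λ^{|I|}` on independent sets of `G`, that the sampled independent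
set has size less than `(1−ε)N` is at most `1/n`. -/
theorem stmt_16 {V : Type*} [Fintype V] [DecidableEq V]
    (G : SimpleGraph V) [DecidableRel G.Adj]
    (n N : ℕ) (hcard : Fintype.card V = n) (hn : 0 < n)
    (hN : IsGreatest {m : ℕ | ∃ I : Finset V,
      (∀ a ∈ I, ∀ b ∈ I, a ≠ b → ¬ G.Adj a b) ∧ I.card = m} N)
    (hNhalf : (n : ℝ) / 2 ≤ (N : ℝ))
    (ε : ℝ) (hε0 : 0 < ε) (hε1 : ε < 1)
    (lam : ℝ) (hlam : (4 : ℝ) ^ (1 / ε + Real.logb 2 n / (ε * n)) ≤ lam) :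
    (∑ I ∈ Finset.univ.filter (fun I : Finset V =>
        (∀ a ∈ I, ∀ b ∈ I, a ≠ b → ¬ G.Adj a b) ∧ (I.card : ℝ) < (1 - ε) * N),
        lam ^ I.card) /
      (∑ I ∈ Finset.univ.filter (fun I : Finset V =>
        ∀ a ∈ I, ∀ b ∈ I, a ≠ b → ¬ G.Adj a b), lam ^ I.card) ≤ 1 / n :=
  stmt_16_general G n N hcard hn hN hNhalf ε hε0 lam hlam
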